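/- Let (C_m, α_m)_{m≥0} and (D_n, β_n)_{n≥0} be sequences of ℤ-graded chain complexes of 𝔽₂-vector spaces with increment chain maps. Denote by α^k : C_m → C_{m+k} (resp. β^k : D_n → D_{n+k}) the k-fold composition of increments. Then the 𝔽₂-linear map Φ : Tel(C_m, α_m) ⊗ Tel(D_n, β_n) → Tel(C_m ⊗ D_m, α_m ⊗ β_m), defined on (x + q·x') ⊗ (y + q·y') with x, x' ∈ C_m and y, y' ∈ D_n by Φ((x + q·x') ⊗ (y + q·y')) = (x ⊗ y) + q·(x ⊗ y' + x' ⊗ y) if m = n, Φ((x + q·x') ⊗ (y + q·y')) = (α^{n−m} x) ⊗ (y + q·y') if m < n (meaning α^{n−m}x ⊗ y + q·(α^{n−m}x ⊗ y')), and Φ((x + q·x') ⊗ (y + q·y')) = (x + q·x') ⊗ (β^{m−n} y) if m > n, is a morphism of chain complexes, where the tensor product of chain complexes carries the differential Id ⊗ δ + δ ⊗ Id. -/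

import Mathlib

open DirectSum TensorProduct

/-- A ℤ-graded chain complex of vector spaces over `𝔽₂ = ZMod 2`, with a
differential `d` of degree `-1` squaring to zero. -/
structure F2GradedComplex : Type 1 where
  V : Type
  [addCommGroup : AddCommGroup V]
  [module : Module (ZMod 2) V]
  grading : ℤ → Submodule (ZMod 2) V
  internal : DirectSum.IsInternal grading
  d : V →ₗ[ZMod 2] V
  d_degree : ∀ i : ℤ, (grading i).map d ≤ grading (i - 1)
  d_sq : d ∘ₗ d = 0

attribute [instance] F2GradedComplex.addCommGroup F2GradedComplex.module

/-- A linear map is homogeneous of degree `k`. -/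
def HasDegree (C D : F2GradedComplex) (k : ℤ) (f : C.V →ₗ[ZMod 2] D.V) : Prop :=
  ∀ i : ℤ, (C.grading i).map f ≤ D.grading (i + k)

/-- A chain map: a linear map of degree `0` commuting with the differentials. -/
def IsChainMap (C D : F2GradedComplex) (f : C.V →ₗ[ZMod 2] D.V) : Prop :=
  HasDegree C D 0 f ∧ f ∘ₗ C.d = D.d ∘ₗ f

/-- Underlying module of the telescope of a sequence of modules `V_N`:
`⊕_N (V_N ⊕ q·V_N)` with `q` a formal variable of degree one. -/
abbrev TelVGen (V : ℕ → Type) [∀ N, AddCommGroup (V N)]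
    [∀ N, Module (ZMod 2) (V N)] : Type :=
  ⨁ N : ℕ, (V N × V N)

/-- The telescope differential `δ (a + q b) = d a + q (d b) + a_N b + b` of a
sequence of complexes with underlying modules `V_N`, differentials `d_N` and
increments `a_N`. -/
noncomputable def telDeltaGen (V : ℕ → Type) [∀ N, AddCommGroup (V N)]
    [∀ N, Module (ZMod 2) (V N)]
    (d : ∀ N : ℕ, V N →ₗ[ZMod 2] V N)
    (a : ∀ N : ℕ, V N →ₗ[ZMod 2] V (N + 1)) :
    TelVGen V →ₗ[ZMod 2] TelVGen V :=
  DirectSum.toModule (ZMod 2) ℕ (TelVGen V) fun N =>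
    (DirectSum.lof (ZMod 2) ℕ (fun N => V N × V N) N ∘ₗ
        LinearMap.prod
          (d N ∘ₗ LinearMap.fst (ZMod 2) (V N) (V N)
            + LinearMap.snd (ZMod 2) (V N) (V N))
          (d N ∘ₗ LinearMap.snd (ZMod 2) (V N) (V N)))
      + (DirectSum.lof (ZMod 2) ℕ (fun N => V N × V N) (N + 1) ∘ₗ
          LinearMap.prod (a N ∘ₗ LinearMap.snd (ZMod 2) (V N) (V N)) 0)

/-- Underlying module of the telescope `Tel(C_N, α_N)`. -/
abbrev TelV (C : ℕ → F2GradedComplex) : Type := TelVGen (fun N => (C N).V)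

/-- Transport along an equality of indices. -/
def castV (C : ℕ → F2GradedComplex) {k l : ℕ} (h : k = l) :
    (C k).V →ₗ[ZMod 2] (C l).V := by subst h; exact LinearMap.id

/-- Iterated increment `α^k = α ∘ ⋯ ∘ α : C_m → C_{m+k}`. -/
noncomputable def incrPow (C : ℕ → F2GradedComplex)
    (α : ∀ N : ℕ, (C N).V →ₗ[ZMod 2] (C (N + 1)).V) (m : ℕ) :
    (k : ℕ) → (C m).V →ₗ[ZMod 2] (C (m + k)).V
  | 0 => LinearMap.id
  | k + 1 => α (m + k) ∘ₗ incrPow C α m k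

/-- Iterated increment `α^{n-m} : C_m → C_n` for `m ≤ n`. -/
noncomputable def incrPowLe (C : ℕ → F2GradedComplex)
    (α : ∀ N : ℕ, (C N).V →ₗ[ZMod 2] (C (N + 1)).V) {m n : ℕ} (h : m ≤ n) :
    (C m).V →ₗ[ZMod 2] (C n).V :=
  castV C (Nat.add_sub_cancel' h) ∘ₗ incrPow C α m (n - m)

/-- Underlying module of the telescope `Tel(C_m ⊗ D_m, α_m ⊗ β_m)` of the
tensor-product complexes. -/
abbrev TensorTelV (C D : ℕ → F2GradedComplex) : Type :=
  TelVGen (fun N => TensorProduct (ZMod 2) (C N).V (D N).V)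

/-- Bilinear map `((x, x'), (y, y')) ↦ f (x, x') ⊗ g (y, y')` into the tensor
product of the `N`-th complexes. -/
noncomputable def pairTmul (C D : ℕ → F2GradedComplex) (m n N : ℕ)
    (f : ((C m).V × (C m).V) →ₗ[ZMod 2] (C N).V)
    (g : ((D n).V × (D n).V) →ₗ[ZMod 2] (D N).V) :
    ((C m).V × (C m).V) →ₗ[ZMod 2]
      ((D n).V × (D n).V) →ₗ[ZMod 2] TensorProduct (ZMod 2) (C N).V (D N).V :=
  ((TensorProduct.mk (ZMod 2) (C N).V (D N).V).comp f).compl₂ g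

/-- Inclusion of the non-`q` slot of the `N`-th summand of the target
telescope. -/
noncomputable def intoTel₁ (C D : ℕ → F2GradedComplex) (N : ℕ) :
    TensorProduct (ZMod 2) (C N).V (D N).V →ₗ[ZMod 2] TensorTelV C D :=
  DirectSum.lof (ZMod 2) ℕ
      (fun N => TensorProduct (ZMod 2) (C N).V (D N).V
        × TensorProduct (ZMod 2) (C N).V (D N).V) N ∘ₗ
    LinearMap.inl (ZMod 2) _ _

/-- Inclusion of the `q` slot of the `N`-th summand of the target telescope. -/
noncomputable def intoTel₂ (C D : ℕ → F2GradedComplex) (N : ℕ) :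
    TensorProduct (ZMod 2) (C N).V (D N).V →ₗ[ZMod 2] TensorTelV C D :=
  DirectSum.lof (ZMod 2) ℕ
      (fun N => TensorProduct (ZMod 2) (C N).V (D N).V
        × TensorProduct (ZMod 2) (C N).V (D N).V) N ∘ₗ
    LinearMap.inr (ZMod 2) _ _

/-- The `(m, n)` component of the map `Φ`, as a bilinear map
`(C_m ⊕ q C_m) → (D_n ⊕ q D_n) → Tel(C ⊗ D)`:
  * if `m = n` : `(x + q x') ⊗ (y + q y') ↦ x ⊗ y + q (x ⊗ y' + x' ⊗ y)`;
  * if `m < n` : `(x + q x') ⊗ (y + q y') ↦ α^{n-m} x ⊗ (y + q y')`;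
  * if `m > n` : `(x + q x') ⊗ (y + q y') ↦ (x + q x') ⊗ β^{m-n} y`. -/
noncomputable def phiComponent (C D : ℕ → F2GradedComplex)
    (α : ∀ N : ℕ, (C N).V →ₗ[ZMod 2] (C (N + 1)).V)
    (β : ∀ N : ℕ, (D N).V →ₗ[ZMod 2] (D (N + 1)).V) (m n : ℕ) :
    ((C m).V × (C m).V) →ₗ[ZMod 2]
      ((D n).V × (D n).V) →ₗ[ZMod 2] TensorTelV C D :=
  if h : m = n then
    (pairTmul C D m n n (castV C h ∘ₗ LinearMap.fst (ZMod 2) (C m).V (C m).V)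
        (LinearMap.fst (ZMod 2) (D n).V (D n).V)).compr₂ (intoTel₁ C D n)
      + (pairTmul C D m n n (castV C h ∘ₗ LinearMap.fst (ZMod 2) (C m).V (C m).V)
            (LinearMap.snd (ZMod 2) (D n).V (D n).V)
          + pairTmul C D m n n (castV C h ∘ₗ LinearMap.snd (ZMod 2) (C m).V (C m).V)
            (LinearMap.fst (ZMod 2) (D n).V (D n).V)).compr₂ (intoTel₂ C D n)
  else if h' : m < n then
    (pairTmul C D m n n (incrPowLe C α h'.le ∘ₗ LinearMap.fst (ZMod 2) (C m).V (C m).V)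
        (LinearMap.fst (ZMod 2) (D n).V (D n).V)).compr₂ (intoTel₁ C D n)
      + (pairTmul C D m n n (incrPowLe C α h'.le ∘ₗ LinearMap.fst (ZMod 2) (C m).V (C m).V)
          (LinearMap.snd (ZMod 2) (D n).V (D n).V)).compr₂ (intoTel₂ C D n)
  else
    (pairTmul C D m n m (LinearMap.fst (ZMod 2) (C m).V (C m).V)
        (incrPowLe D β (Nat.le_of_not_lt h') ∘ₗ LinearMap.fst (ZMod 2) (D n).V (D n).V)).compr₂
        (intoTel₁ C D m)
      + (pairTmul C D m n m (LinearMap.snd (ZMod 2) (C m).V (C m).V)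
          (incrPowLe D β (Nat.le_of_not_lt h') ∘ₗ LinearMap.fst (ZMod 2) (D n).V (D n).V)).compr₂
          (intoTel₂ C D m)

/-- The map `Φ : Tel(C_m, α_m) ⊗ Tel(D_n, β_n) → Tel(C_m ⊗ D_m, α_m ⊗ β_m)`. -/
noncomputable def telTensorPhi (C D : ℕ → F2GradedComplex)
    (α : ∀ N : ℕ, (C N).V →ₗ[ZMod 2] (C (N + 1)).V)
    (β : ∀ N : ℕ, (D N).V →ₗ[ZMod 2] (D (N + 1)).V) :
    TensorProduct (ZMod 2) (TelV C) (TelV D) →ₗ[ZMod 2] TensorTelV C D :=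
  TensorProduct.lift
    (DirectSum.toModule (ZMod 2) ℕ (TelV D →ₗ[ZMod 2] TensorTelV C D) fun m =>
      (DirectSum.toModule (ZMod 2) ℕ (((C m).V × (C m).V) →ₗ[ZMod 2] TensorTelV C D)
        fun n => (phiComponent C D α β m n).flip).flip)

/-! Both sides are linear, so it suffices to compare them on generators `(m, p) ⊗ (n, q)` with
`p ∈ C_m ⊕ q·C_m` and `q ∈ D_n ⊕ q·D_n`. There the identity splits into the cases `m < n`,
`m = n` and `m > n`. In each case, once the iterated increments are commuted past the
differentials (they are chain maps) and `α^{k} ∘ α = α^{k+1}` is used, every term of the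
difference occurs exactly twice, so it vanishes over `𝔽₂`. -/

section Increments

variable (C : ℕ → F2GradedComplex) (α : ∀ N : ℕ, (C N).V →ₗ[ZMod 2] (C (N + 1)).V)

lemma incr_comp_castV {k l : ℕ} (h : k = l) :
    α l ∘ₗ castV C h = castV C (congrArg (· + 1) h) ∘ₗ α k := by
  subst h; rfl

lemma incrPowLe_eq_castV_comp {m n : ℕ} (h : m ≤ n) (k : ℕ) (hk : m + k = n) :
    incrPowLe C α h = castV C hk ∘ₗ incrPow C α m k := by
  obtain rfl : k = n - m := by omega
  rfl

lemma incrPowLe_refl (m : ℕ) : incrPowLe C α (le_refl m) = LinearMap.id :=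
  incrPowLe_eq_castV_comp C α _ 0 rfl

lemma incrPowLe_succ_right {m n : ℕ} (h : m ≤ n) (h' : m ≤ n + 1) :
    incrPowLe C α h' = α n ∘ₗ incrPowLe C α h := by
  have hk : m + (n - m) = n := by omega
  rw [incrPowLe_eq_castV_comp C α h' (n - m + 1) (by omega),
    incrPowLe_eq_castV_comp C α h _ hk, ← LinearMap.comp_assoc, incr_comp_castV C α hk]
  rfl

lemma incrPowLe_self_succ (m : ℕ) : incrPowLe C α m.le_succ = α m := by
  rw [incrPowLe_succ_right C α le_rfl, incrPowLe_refl, LinearMap.comp_id]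

lemma incrPowLe_succ_left {m n : ℕ} (h : m + 1 ≤ n) (h' : m ≤ n) (x : (C m).V) :
    incrPowLe C α h (α m x) = incrPowLe C α h' x := by
  induction n, h using Nat.le_induction with
  | base => rw [incrPowLe_refl, incrPowLe_self_succ, LinearMap.id_apply]
  | succ n hn ih =>
    rw [incrPowLe_succ_right C α hn, incrPowLe_succ_right C α (by omega : m ≤ n),
      LinearMap.comp_apply, LinearMap.comp_apply, ih]

lemma d_incrPowLe (hα : ∀ N x, α N ((C N).d x) = (C (N + 1)).d (α N x)) {m n : ℕ}
    (h : m ≤ n) (x : (C m).V) :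
    (C n).d (incrPowLe C α h x) = incrPowLe C α h ((C m).d x) := by
  induction n, h using Nat.le_induction with
  | base => rw [incrPowLe_refl]; rfl
  | succ n hn ih =>
    rw [incrPowLe_succ_right C α hn, LinearMap.comp_apply, LinearMap.comp_apply, ← ih, hα]

end Increments

lemma telDeltaGen_lof (V : ℕ → Type) [∀ N, AddCommGroup (V N)] [∀ N, Module (ZMod 2) (V N)]
    (d : ∀ N : ℕ, V N →ₗ[ZMod 2] V N) (a : ∀ N : ℕ, V N →ₗ[ZMod 2] V (N + 1)) (N : ℕ)
    (p : V N × V N) :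
    telDeltaGen V d a (lof (ZMod 2) ℕ (fun N => V N × V N) N p)
      = lof (ZMod 2) ℕ (fun N => V N × V N) N (d N p.1 + p.2, d N p.2)
        + lof (ZMod 2) ℕ (fun N => V N × V N) (N + 1) (a N p.2, 0) := by
  simp [telDeltaGen, toModule_lof]

section Phi

variable (C D : ℕ → F2GradedComplex) (α : ∀ N : ℕ, (C N).V →ₗ[ZMod 2] (C (N + 1)).V)
  (β : ∀ N : ℕ, (D N).V →ₗ[ZMod 2] (D (N + 1)).V)

noncomputable abbrev tensorTelDelta : TensorTelV C D →ₗ[ZMod 2] TensorTelV C D :=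
  telDeltaGen (fun N => (C N).V ⊗[ZMod 2] (D N).V)
    (fun N => TensorProduct.map LinearMap.id (D N).d + TensorProduct.map (C N).d LinearMap.id)
    (fun N => TensorProduct.map (α N) (β N))

lemma tensorTelDelta_intoTel₁ (N : ℕ) (x : (C N).V) (y : (D N).V) :
    tensorTelDelta C D α β (intoTel₁ C D N (x ⊗ₜ y))
      = intoTel₁ C D N (x ⊗ₜ (D N).d y + (C N).d x ⊗ₜ y) := by
  simp [intoTel₁, telDeltaGen_lof, Prod.mk_zero_zero]

lemma tensorTelDelta_intoTel₂ (N : ℕ) (x : (C N).V) (y : (D N).V) :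
    tensorTelDelta C D α β (intoTel₂ C D N (x ⊗ₜ y))
      = intoTel₁ C D N (x ⊗ₜ y) + intoTel₂ C D N (x ⊗ₜ (D N).d y + (C N).d x ⊗ₜ y)
        + intoTel₁ C D (N + 1) (α N x ⊗ₜ β N y) := by
  simp only [intoTel₁, intoTel₂, LinearMap.comp_apply, LinearMap.inl_apply, LinearMap.inr_apply,
    telDeltaGen_lof, LinearMap.add_apply, map_tmul, LinearMap.id_apply, map_zero, zero_add]
  rw [← map_add, Prod.mk_add_mk, add_zero, zero_add]

lemma telTensorPhi_lof_tmul_lof (m n : ℕ) (p : (C m).V × (C m).V) (q : (D n).V × (D n).V) :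
    telTensorPhi C D α β (lof (ZMod 2) ℕ _ m p ⊗ₜ lof (ZMod 2) ℕ _ n q)
      = phiComponent C D α β m n p q := by
  simp [telTensorPhi, toModule_lof]

lemma phiComponent_self (n : ℕ) (p : (C n).V × (C n).V) (q : (D n).V × (D n).V) :
    phiComponent C D α β n n p q
      = intoTel₁ C D n (p.1 ⊗ₜ q.1) + intoTel₂ C D n (p.1 ⊗ₜ q.2 + p.2 ⊗ₜ q.1) := by
  simp [phiComponent, pairTmul, castV]

lemma phiComponent_of_lt {m n : ℕ} (h : m < n) (p : (C m).V × (C m).V)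
    (q : (D n).V × (D n).V) :
    phiComponent C D α β m n p q
      = intoTel₁ C D n (incrPowLe C α h.le p.1 ⊗ₜ q.1)
        + intoTel₂ C D n (incrPowLe C α h.le p.1 ⊗ₜ q.2) := by
  simp [phiComponent, pairTmul, h.ne, h]

lemma phiComponent_of_gt {m n : ℕ} (h : n < m) (p : (C m).V × (C m).V)
    (q : (D n).V × (D n).V) :
    phiComponent C D α β m n p q
      = intoTel₁ C D m (p.1 ⊗ₜ incrPowLe D β h.le q.1)
        + intoTel₂ C D m (p.2 ⊗ₜ incrPowLe D β h.le q.1) := by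
  simp [phiComponent, pairTmul, h.ne', h.not_gt]

lemma phiComponent_inl_of_le {m n : ℕ} (h : m ≤ n) (x : (C m).V) (q : (D n).V × (D n).V) :
    phiComponent C D α β m n (x, 0) q
      = intoTel₁ C D n (incrPowLe C α h x ⊗ₜ q.1)
        + intoTel₂ C D n (incrPowLe C α h x ⊗ₜ q.2) := by
  obtain h | rfl := h.lt_or_eq
  · exact phiComponent_of_lt C D α β h _ q
  · simp [phiComponent_self, incrPowLe_refl]

lemma phiComponent_inl_of_ge {m n : ℕ} (h : n ≤ m) (p : (C m).V × (C m).V) (y : (D n).V) :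
    phiComponent C D α β m n p (y, 0)
      = intoTel₁ C D m (p.1 ⊗ₜ incrPowLe D β h y)
        + intoTel₂ C D m (p.2 ⊗ₜ incrPowLe D β h y) := by
  obtain h | rfl := h.lt_or_eq
  · exact phiComponent_of_gt C D α β h p _
  · simp [phiComponent_self, incrPowLe_refl]

lemma phiComponent_leibniz_self (n : ℕ) (p : (C n).V × (C n).V) (q : (D n).V × (D n).V) :
    phiComponent C D α β n n p ((D n).d q.1 + q.2, (D n).d q.2)
      + phiComponent C D α β n (n + 1) p (β n q.2, 0)
      + phiComponent C D α β n n ((C n).d p.1 + p.2, (C n).d p.2) q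
      + phiComponent C D α β (n + 1) n (α n p.2, 0) q
    = tensorTelDelta C D α β (phiComponent C D α β n n p q) := by
  obtain ⟨x, x'⟩ := p
  obtain ⟨y, y'⟩ := q
  simp only [phiComponent_self, phiComponent_of_lt C D α β n.lt_succ_self,
    phiComponent_of_gt C D α β n.lt_succ_self, incrPowLe_self_succ, map_add,
    tensorTelDelta_intoTel₁, tensorTelDelta_intoTel₂, tmul_add, add_tmul, tmul_zero, zero_tmul,
    map_zero, add_zero]
  rw [← sub_eq_zero, ZModModule.sub_eq_add]
  abel_nf
  simp only [two_zsmul, ZModModule.add_self]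

lemma phiComponent_leibniz_of_lt (hα : ∀ N x, α N ((C N).d x) = (C (N + 1)).d (α N x))
    {m n : ℕ} (h : m < n) (p : (C m).V × (C m).V) (q : (D n).V × (D n).V) :
    phiComponent C D α β m n p ((D n).d q.1 + q.2, (D n).d q.2)
      + phiComponent C D α β m (n + 1) p (β n q.2, 0)
      + phiComponent C D α β m n ((C m).d p.1 + p.2, (C m).d p.2) q
      + phiComponent C D α β (m + 1) n (α m p.2, 0) q
    = tensorTelDelta C D α β (phiComponent C D α β m n p q) := by
  obtain ⟨x, x'⟩ := p
  obtain ⟨y, y'⟩ := q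
  simp only [phiComponent_of_lt C D α β h, phiComponent_of_lt C D α β (h.trans n.lt_succ_self),
    phiComponent_inl_of_le C D α β h, incrPowLe_succ_right C α h.le,
    incrPowLe_succ_left C α h h.le, LinearMap.comp_apply, map_add,
    tensorTelDelta_intoTel₁, tensorTelDelta_intoTel₂, d_incrPowLe C α hα, tmul_add, add_tmul,
    tmul_zero, map_zero, add_zero]
  rw [← sub_eq_zero, ZModModule.sub_eq_add]
  abel_nf
  simp only [two_zsmul, ZModModule.add_self]

lemma phiComponent_leibniz_of_gt (hβ : ∀ N y, β N ((D N).d y) = (D (N + 1)).d (β N y))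
    {m n : ℕ} (h : n < m) (p : (C m).V × (C m).V) (q : (D n).V × (D n).V) :
    phiComponent C D α β m n p ((D n).d q.1 + q.2, (D n).d q.2)
      + phiComponent C D α β m (n + 1) p (β n q.2, 0)
      + phiComponent C D α β m n ((C m).d p.1 + p.2, (C m).d p.2) q
      + phiComponent C D α β (m + 1) n (α m p.2, 0) q
    = tensorTelDelta C D α β (phiComponent C D α β m n p q) := by
  obtain ⟨x, x'⟩ := p
  obtain ⟨y, y'⟩ := q
  simp only [phiComponent_of_gt C D α β h, phiComponent_of_gt C D α β (h.trans m.lt_succ_self),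
    phiComponent_inl_of_ge C D α β h, incrPowLe_succ_right D β h.le,
    incrPowLe_succ_left D β h h.le, LinearMap.comp_apply, map_add,
    tensorTelDelta_intoTel₁, tensorTelDelta_intoTel₂, d_incrPowLe D β hβ, tmul_add, add_tmul,
    zero_tmul, map_zero, add_zero]
  rw [← sub_eq_zero, ZModModule.sub_eq_add]
  abel_nf
  simp only [two_zsmul, ZModModule.add_self]

end Phi

/-- The map `Φ` is a morphism of chain complexes from
`Tel(C_m, α_m) ⊗ Tel(D_n, β_n)` (with the differential `Id ⊗ δ + δ ⊗ Id`) to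
the telescope `Tel(C_m ⊗ D_m, α_m ⊗ β_m)` of the tensor-product complexes
(each `C_m ⊗ D_m` carrying the differential `Id ⊗ d + d ⊗ Id`). -/
theorem telTensorPhi_chainMap (C D : ℕ → F2GradedComplex)
    (α : ∀ N : ℕ, (C N).V →ₗ[ZMod 2] (C (N + 1)).V)
    (hα : ∀ N : ℕ, IsChainMap (C N) (C (N + 1)) (α N))
    (β : ∀ N : ℕ, (D N).V →ₗ[ZMod 2] (D (N + 1)).V)
    (hβ : ∀ N : ℕ, IsChainMap (D N) (D (N + 1)) (β N)) :
    telTensorPhi C D α β ∘ₗ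
        (TensorProduct.map LinearMap.id
            (telDeltaGen (fun N => (D N).V) (fun N => (D N).d) β)
          + TensorProduct.map
              (telDeltaGen (fun N => (C N).V) (fun N => (C N).d) α) LinearMap.id)
      = telDeltaGen (fun N => TensorProduct (ZMod 2) (C N).V (D N).V)
          (fun N => TensorProduct.map LinearMap.id (D N).d
            + TensorProduct.map (C N).d LinearMap.id)
          (fun N => TensorProduct.map (α N) (β N))
        ∘ₗ telTensorPhi C D α β := by
  refine TensorProduct.ext (linearMap_ext _ fun m => LinearMap.ext fun p =>
    linearMap_ext _ fun n => LinearMap.ext fun q => ?_)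
  simp only [LinearMap.compr₂ₛₗ_apply, mk_apply, LinearMap.comp_apply, LinearMap.add_apply,
    map_tmul, LinearMap.id_apply, telDeltaGen_lof, tmul_add, add_tmul, map_add,
    telTensorPhi_lof_tmul_lof]
  rw [← add_assoc]
  obtain h | rfl | h := lt_trichotomy m n
  · rw [← phiComponent_leibniz_of_lt C D α β (fun N => LinearMap.congr_fun (hα N).2) h]
  · rw [← phiComponent_leibniz_self]
  · rw [← phiComponent_leibniz_of_gt C D α β (fun N => LinearMap.congr_fun (hβ N).2) h]
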